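/- Let k be a positive integer, λ = (λ_1,…,λ_n) a k-bounded partition, and μ = (μ_1,…,μ_m) = λ^{ω_k} its k-conjugate. Then the conjugate (transpose across the main diagonal) of the skew diagram D(λ) = λ_1 ×^{(k)} ⋯ ×^{(k)} λ_n equals the skew diagram D(μ) = μ_1 ×^{(k)} ⋯ ×^{(k)} μ_m. -/

import Mathlib

/-- A partition: a weakly decreasing list of positive integers
(parts listed from largest to smallest). -/
def IsPartitionList (l : List ℕ) : Prop :=
  l.Pairwise (· ≥ ·) ∧ ∀ x ∈ l, 0 < x

/-- A `k`-bounded partition: a partition all of whose parts are at most `k`. -/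
def IsKBoundedPartition (k : ℕ) (l : List ℕ) : Prop :=
  IsPartitionList l ∧ ∀ x ∈ l, x ≤ k

/-- Row `i` of a diagram whose rows (listed bottom-to-top) are encoded as
(start column, length) pairs. -/
def rowOf (D : List (ℕ × ℕ)) (i : ℕ) : ℕ × ℕ := D.getD i (0, 0)

/-- `D` encodes a skew diagram (a difference of Young diagrams, rows listed from
bottom to top): all rows are nonempty and, going up, both the left ends and the
right ends of the rows move weakly to the left. -/
def IsSkewRows (D : List (ℕ × ℕ)) : Prop :=
  (∀ r ∈ D, 0 < r.2) ∧
  D.Chain' fun r r' => r'.1 ≤ r.1 ∧ r'.1 + r'.2 ≤ r.1 + r.2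

/-- Cell in row `i` (from the bottom), column `j`, belongs to the diagram `D`. -/
def InDiag (D : List (ℕ × ℕ)) (i j : ℕ) : Prop :=
  i < D.length ∧ (rowOf D i).1 ≤ j ∧ j < (rowOf D i).1 + (rowOf D i).2

/-- The arm of a cell: the number of cells of `D` strictly to its east. -/
def armLen (D : List (ℕ × ℕ)) (i j : ℕ) : ℕ :=
  (rowOf D i).1 + (rowOf D i).2 - 1 - j

/-- The leg of a cell: the number of cells of `D` strictly to its north. -/
def legLen (D : List (ℕ × ℕ)) (i j : ℕ) : ℕ :=
  ((Finset.range D.length).filter fun i' =>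
    i < i' ∧ (rowOf D i').1 ≤ j ∧ j < (rowOf D i').1 + (rowOf D i').2).card

/-- The hook-length of a cell of `D`. -/
def hookLen (D : List (ℕ × ℕ)) (i j : ℕ) : ℕ := armLen D i j + legLen D i j + 1

/-- All hook-lengths of `D` are at most `k`. -/
def HookBounded (k : ℕ) (D : List (ℕ × ℕ)) : Prop :=
  ∀ i j, InDiag D i j → hookLen D i j ≤ k

/-- Shift `D` one column to the right and adjoin a new column of `m` cells in
column `0`, occupying the `m` consecutive rows `h, …, h + m - 1`. -/
def addCol (m h : ℕ) (D : List (ℕ × ℕ)) : List (ℕ × ℕ) :=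
  (List.range (max D.length (h + m))).map fun i =>
    if h ≤ i ∧ i < h + m then
      if i < D.length then (0, (rowOf D i).1 + (rowOf D i).2 + 1) else (0, 1)
    else ((rowOf D i).1 + 1, (rowOf D i).2)

/-- The placement of the new column at height `h` yields a genuine skew diagram
(rows stay contiguous) whose hook-lengths are bounded by `k`. -/
def ColValid (k m h : ℕ) (D : List (ℕ × ℕ)) : Prop :=
  (∀ i, h ≤ i → i < h + m → i < D.length → (rowOf D i).1 = 0) ∧
  IsSkewRows (addCol m h D) ∧ HookBounded k (addCol m h D)

/-- `k`-multiplication `m ×^{(k)} D`: adjoin a first column of length `m` to `D`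
so that the result is a skew diagram with hook-lengths bounded by `k`, having as
few rows as possible (the valid placement heights `h` all satisfy
`h + m ≥ number of rows`, so the lowest valid placement has fewest rows). -/
noncomputable def kMul (k m : ℕ) (D : List (ℕ × ℕ)) : List (ℕ × ℕ) :=
  addCol m (sInf {h | ColValid k m h D}) D

/-- `D(λ)`: the skew diagram obtained by `k`-multiplying the parts of `λ` from
right to left, the innermost part giving a single column. -/
noncomputable def kSkewDiagram (k : ℕ) : List ℕ → List (ℕ × ℕ)
  | [] => []
  | m :: rest => kMul k m (kSkewDiagram k rest)

/-- The `k`-conjugate `λ^{ω_k}`: the row lengths of `D(λ)`, read from the bottom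
row to the top row. -/
noncomputable def kConjugate (k : ℕ) (l : List ℕ) : List ℕ :=
  (kSkewDiagram k l).map Prod.snd

/-- The set of cells `(row, column)` of the diagram `D`. -/
def cellsOf (D : List (ℕ × ℕ)) : Finset (ℕ × ℕ) :=
  (Finset.range D.length).biUnion fun i =>
    (Finset.Ico (rowOf D i).1 ((rowOf D i).1 + (rowOf D i).2)).image fun j => (i, j)

/-!
Write `D = D(λ)`; its row lengths are `μ = λ^{ω_k}`. Building `D` one column at a time shows
that its columns have heights `λ_1, λ_2, …` and that each sits as low as the hook bound allows.
The rows of `D`, adjoined one at a time from the top, build its transpose: adding row `j` as a new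
first column, at the height where row `j` starts, to the transpose of the rows above row `j` gives
the transpose of the rows from `j` up. This placement is valid since transposition preserves hook
lengths, and no lower one is: it would put the new column next to a column of `D` that starts
right above row `j` and, `λ` being decreasing, is at least as high as the column just left of
row `j`, which itself could not be lowered onto row `j`.
-/

lemma List.getD_le_getD_of_pairwise_ge {L : List ℕ} (hL : L.Pairwise (· ≥ ·)) {a b : ℕ}
    (hab : a ≤ b) (hb : b < L.length) : L.getD b 0 ≤ L.getD a 0 := by
  rw [List.getD_eq_getElem _ _ hb, List.getD_eq_getElem _ _ (hab.trans_lt hb)]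
  rcases hab.eq_or_lt with rfl | hab
  · exact le_rfl
  · exact List.pairwise_iff_getElem.mp hL a b _ hb hab

section Rows

def rowStart (D : List (ℕ × ℕ)) (i : ℕ) : ℕ := (rowOf D i).1

def rowLen (D : List (ℕ × ℕ)) (i : ℕ) : ℕ := (rowOf D i).2

def rowEnd (D : List (ℕ × ℕ)) (i : ℕ) : ℕ := (rowOf D i).1 + (rowOf D i).2

variable {D : List (ℕ × ℕ)} {i j : ℕ}

lemma rowEnd_eq (D : List (ℕ × ℕ)) (i : ℕ) : rowEnd D i = rowStart D i + rowLen D i := rfl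

lemma rowOf_of_length_le (h : D.length ≤ i) : rowOf D i = (0, 0) :=
  List.getD_eq_default _ _ h

lemma rowOf_eq_getElem (h : i < D.length) : rowOf D i = D[i] :=
  List.getD_eq_getElem _ _ h

lemma rowStart_of_length_le (h : D.length ≤ i) : rowStart D i = 0 := by
  simp [rowStart, rowOf_of_length_le h]

lemma rowEnd_of_length_le (h : D.length ≤ i) : rowEnd D i = 0 := by
  simp [rowEnd, rowOf_of_length_le h]

lemma inDiag_iff : InDiag D i j ↔ i < D.length ∧ rowStart D i ≤ j ∧ j < rowEnd D i :=
  Iff.rfl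

lemma lt_length_of_lt_rowEnd (h : j < rowEnd D i) : i < D.length := by
  by_contra hi
  rw [rowEnd_of_length_le (not_lt.mp hi)] at h
  exact Nat.not_lt_zero _ h

lemma rowOf_eq_iff {E : List (ℕ × ℕ)} {i' : ℕ} :
    rowOf D i = rowOf E i' ↔ rowStart D i = rowStart E i' ∧ rowEnd D i = rowEnd E i' := by
  simp only [Prod.ext_iff, rowStart, rowEnd]
  omega

lemma ext_of_rowStart_of_rowEnd {E : List (ℕ × ℕ)} (hlen : D.length = E.length)
    (hrow : ∀ i < D.length, rowStart D i = rowStart E i ∧ rowEnd D i = rowEnd E i) : D = E := by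
  refine List.ext_getElem hlen fun i hD hE => ?_
  rw [← rowOf_eq_getElem hD, ← rowOf_eq_getElem hE, rowOf_eq_iff]
  exact hrow i hD

lemma mem_cellsOf {p : ℕ × ℕ} : p ∈ cellsOf D ↔ InDiag D p.1 p.2 := by
  obtain ⟨i, j⟩ := p
  simp [cellsOf, InDiag]

lemma rowLen_le_of_hookBounded {k : ℕ} (hB : HookBounded k D) (i : ℕ) : rowLen D i ≤ k := by
  rcases Nat.eq_zero_or_pos (rowLen D i) with h0 | hpos
  · exact h0 ▸ Nat.zero_le k
  · have hi : rowStart D i < rowEnd D i := by rw [rowEnd_eq]; omega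
    have := hB i (rowStart D i) ⟨lt_length_of_lt_rowEnd hi, le_rfl, hi⟩
    simp only [hookLen, armLen, rowLen, rowStart] at this ⊢
    omega

lemma isSkewRows_iff :
    IsSkewRows D ↔ (∀ i < D.length, 0 < rowLen D i) ∧
      ∀ i, i + 1 < D.length →
        rowStart D (i + 1) ≤ rowStart D i ∧ rowEnd D (i + 1) ≤ rowEnd D i := by
  refine and_congr ?_ ?_
  · simp only [List.forall_mem_iff_getElem, rowLen]
    exact forall₂_congr fun i hi => by rw [rowOf_eq_getElem hi]
  · change List.IsChain _ D ↔ _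
    rw [List.isChain_iff_getElem]
    refine forall₂_congr fun i hi => ?_
    rw [rowStart, rowStart, rowEnd, rowEnd, rowOf_eq_getElem hi,
      rowOf_eq_getElem (Nat.lt_of_succ_lt hi)]

lemma IsSkewRows.rowLen_pos (hD : IsSkewRows D) (hi : i < D.length) : 0 < rowLen D i :=
  (isSkewRows_iff.mp hD).1 i hi

lemma IsSkewRows.antitone_rowStart (hD : IsSkewRows D) : Antitone (rowStart D) :=
  antitone_nat_of_succ_le fun i => by
    by_cases hi : i + 1 < D.length
    · exact ((isSkewRows_iff.mp hD).2 i hi).1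
    · simp [rowStart_of_length_le (not_lt.mp hi)]

lemma IsSkewRows.antitone_rowEnd (hD : IsSkewRows D) : Antitone (rowEnd D) :=
  antitone_nat_of_succ_le fun i => by
    by_cases hi : i + 1 < D.length
    · exact ((isSkewRows_iff.mp hD).2 i hi).2
    · simp [rowEnd_of_length_le (not_lt.mp hi)]

end Rows

section Columns

/-- The lowest row meeting column `c`, for a skew diagram. -/
noncomputable def colBot (D : List (ℕ × ℕ)) (c : ℕ) : ℕ := sInf {r | rowStart D r ≤ c}

/-- One more than the highest row meeting column `c`, for a skew diagram. -/
noncomputable def colTop (D : List (ℕ × ℕ)) (c : ℕ) : ℕ := sInf {r | rowEnd D r ≤ c}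

variable {D : List (ℕ × ℕ)} {r c : ℕ}

lemma colBot_mem (D : List (ℕ × ℕ)) (c : ℕ) : rowStart D (colBot D c) ≤ c :=
  Nat.sInf_mem (s := {r | rowStart D r ≤ c}) ⟨D.length, by simp [rowStart_of_length_le]⟩

lemma colTop_mem (D : List (ℕ × ℕ)) (c : ℕ) : rowEnd D (colTop D c) ≤ c :=
  Nat.sInf_mem (s := {r | rowEnd D r ≤ c}) ⟨D.length, by simp [rowEnd_of_length_le]⟩

lemma antitone_colBot (D : List (ℕ × ℕ)) : Antitone (colBot D) :=
  fun _ _ h => Nat.sInf_le ((colBot_mem D _).trans h)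

lemma antitone_colTop (D : List (ℕ × ℕ)) : Antitone (colTop D) :=
  fun _ _ h => Nat.sInf_le ((colTop_mem D _).trans h)

lemma colBot_le_iff (hD : IsSkewRows D) : colBot D c ≤ r ↔ rowStart D r ≤ c :=
  ⟨fun h => (hD.antitone_rowStart h).trans (colBot_mem D c), fun h => Nat.sInf_le h⟩

lemma lt_colTop_iff (hD : IsSkewRows D) : r < colTop D c ↔ c < rowEnd D r := by
  rw [← not_le, ← not_le, not_iff_not]
  exact ⟨fun h => (hD.antitone_rowEnd h).trans (colTop_mem D c), fun h => Nat.sInf_le h⟩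

lemma inDiag_iff_colBot_colTop (hD : IsSkewRows D) :
    InDiag D r c ↔ colBot D c ≤ r ∧ r < colTop D c := by
  rw [colBot_le_iff hD, lt_colTop_iff hD, inDiag_iff]
  exact ⟨fun h => h.2, fun h => ⟨lt_length_of_lt_rowEnd h.2, h⟩⟩

lemma colBot_colTop_eq_of_inDiag_iff (hD : IsSkewRows D) {B T : ℕ} (hBT : B < T)
    (h : ∀ r, InDiag D r c ↔ B ≤ r ∧ r < T) : colBot D c = B ∧ colTop D c = T := by
  refine (Set.Ico_eq_Ico_iff (Or.inr hBT)).mp (Set.ext fun r => ?_)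
  simp only [Set.mem_Ico, ← inDiag_iff_colBot_colTop hD, h]

lemma colTop_zero (hD : IsSkewRows D) : colTop D 0 = D.length :=
  eq_of_forall_lt_iff fun r => by
    rw [lt_colTop_iff hD, rowEnd_eq]
    exact ⟨fun h => lt_length_of_lt_rowEnd h,
      fun h => Nat.add_pos_right _ (hD.rowLen_pos h)⟩

lemma legLen_eq (hD : IsSkewRows D) (h : InDiag D r c) : legLen D r c = colTop D c - 1 - r := by
  have hcol := (inDiag_iff_colBot_colTop hD).mp h
  have hrows : ((Finset.range D.length).filter fun i =>
      r < i ∧ (rowOf D i).1 ≤ c ∧ c < (rowOf D i).1 + (rowOf D i).2) =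
      Finset.Ico (r + 1) (colTop D c) := by
    ext i
    have := inDiag_iff_colBot_colTop (r := i) (c := c) hD
    simp only [inDiag_iff, rowStart, rowEnd] at this
    simp only [Finset.mem_filter, Finset.mem_range, Finset.mem_Ico]
    omega
  rw [legLen, hrows, Nat.card_Ico]
  omega

lemma hookLen_eq (hD : IsSkewRows D) (h : InDiag D r c) :
    hookLen D r c = (rowEnd D r - 1 - c) + (colTop D c - 1 - r) + 1 := by
  rw [hookLen, legLen_eq hD h]
  rfl

end Columns

section AddCol

variable {k m h i c : ℕ} {D : List (ℕ × ℕ)}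

lemma length_addCol : (addCol m h D).length = max D.length (h + m) := by
  simp [addCol]

lemma rowOf_addCol (hi : i < max D.length (h + m)) :
    rowOf (addCol m h D) i =
      if h ≤ i ∧ i < h + m then (0, rowEnd D i + 1) else (rowStart D i + 1, rowLen D i) := by
  rw [rowOf, List.getD_eq_getElem _ _ (by rwa [length_addCol])]
  simp only [addCol, List.getElem_map, List.getElem_range]
  split_ifs with hcol hiD
  · rfl
  · rw [rowEnd_of_length_le (not_lt.mp hiD)]
  · rfl

lemma rowStart_addCol (hi : i < max D.length (h + m)) :
    rowStart (addCol m h D) i = if h ≤ i ∧ i < h + m then 0 else rowStart D i + 1 := by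
  rw [rowStart, rowOf_addCol hi]
  split_ifs <;> rfl

lemma rowEnd_addCol (hi : i < max D.length (h + m)) :
    rowEnd (addCol m h D) i = rowEnd D i + 1 := by
  rw [rowEnd, rowOf_addCol hi]
  split_ifs
  · exact Nat.zero_add _
  · simp only [rowEnd_eq]
    omega

lemma rowLen_addCol (hi : i < max D.length (h + m)) (hcol : ¬(h ≤ i ∧ i < h + m)) :
    rowLen (addCol m h D) i = rowLen D i := by
  rw [rowLen, rowOf_addCol hi, if_neg hcol]

lemma inDiag_addCol_zero : InDiag (addCol m h D) i 0 ↔ h ≤ i ∧ i < h + m := by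
  rw [inDiag_iff, length_addCol]
  constructor
  · rintro ⟨hi, hs, -⟩
    rw [rowStart_addCol hi] at hs
    split_ifs at hs with hcol
    · exact hcol
    · omega
  · intro hcol
    have hi : i < max D.length (h + m) := lt_max_of_lt_right hcol.2
    exact ⟨hi, by rw [rowStart_addCol hi, if_pos hcol], by rw [rowEnd_addCol hi]; omega⟩

lemma inDiag_addCol_succ
    (hflush : ∀ i, h ≤ i → i < h + m → i < D.length → rowStart D i = 0) :
    InDiag (addCol m h D) i (c + 1) ↔ InDiag D i c := by
  rw [inDiag_iff, inDiag_iff, length_addCol]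
  constructor
  · rintro ⟨hi, hs, he⟩
    rw [rowEnd_addCol hi] at he
    have hiD := lt_length_of_lt_rowEnd (Nat.lt_of_succ_lt_succ he)
    rw [rowStart_addCol hi] at hs
    refine ⟨hiD, ?_, by omega⟩
    split_ifs at hs with hcol
    · rw [hflush i hcol.1 hcol.2 hiD]
      exact Nat.zero_le c
    · omega
  · rintro ⟨hiD, hs, he⟩
    have hi : i < max D.length (h + m) := lt_max_of_lt_left hiD
    refine ⟨hi, ?_, by rw [rowEnd_addCol hi]; omega⟩
    rw [rowStart_addCol hi]
    split_ifs <;> omega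

lemma isSkewRows_addCol (hD : IsSkewRows D) (hh : h ≤ D.length) (hlen : D.length ≤ h + m) :
    IsSkewRows (addCol m h D) := by
  have hmax : max D.length (h + m) = h + m := max_eq_right hlen
  rw [isSkewRows_iff, length_addCol, hmax]
  refine ⟨fun i hi => ?_, fun i hi => ?_⟩
  · have hi' : i < max D.length (h + m) := by omega
    have hpos := rowEnd_addCol (D := D) hi'
    rw [rowEnd_eq, rowStart_addCol hi'] at hpos
    split_ifs at hpos with hcol
    · omega
    · rw [rowLen_addCol hi' hcol]
      exact hD.rowLen_pos (by omega)
  · have hi' : i < max D.length (h + m) := by omega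
    have hi1 : i + 1 < max D.length (h + m) := by omega
    rw [rowStart_addCol hi', rowStart_addCol hi1, rowEnd_addCol hi', rowEnd_addCol hi1]
    have hs := hD.antitone_rowStart (Nat.le_add_right i 1)
    have he := hD.antitone_rowEnd (Nat.le_add_right i 1)
    split_ifs <;> omega

lemma le_length_of_isSkewRows_addCol (hA : IsSkewRows (addCol m h D)) : h ≤ D.length := by
  by_contra! hh
  have hi : h - 1 < max D.length (h + m) := by omega
  have hpos := hA.rowLen_pos (i := h - 1) (by rwa [length_addCol])
  rw [rowLen_addCol hi (by omega), rowLen, rowOf_of_length_le (by omega)] at hpos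
  exact Nat.lt_irrefl 0 hpos

lemma length_le_of_isSkewRows_addCol (hA : IsSkewRows (addCol m h D)) (hm : 0 < m) :
    D.length ≤ h + m := by
  by_contra! hlen
  have hs := hA.antitone_rowStart (Nat.sub_le (h + m) 1)
  rw [rowStart_addCol (by omega), rowStart_addCol (by omega), if_neg (by omega),
    if_pos (by omega)] at hs
  omega

lemma colBot_colTop_addCol_zero (hA : IsSkewRows (addCol m h D)) (hm : 0 < m) :
    colBot (addCol m h D) 0 = h ∧ colTop (addCol m h D) 0 = h + m :=
  colBot_colTop_eq_of_inDiag_iff hA (by omega) fun _ => inDiag_addCol_zero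

lemma colBot_colTop_addCol_succ (hD : IsSkewRows D) (hA : IsSkewRows (addCol m h D))
    (hflush : ∀ i, h ≤ i → i < h + m → i < D.length → rowStart D i = 0)
    (hne : colBot D c < colTop D c) :
    colBot (addCol m h D) (c + 1) = colBot D c ∧ colTop (addCol m h D) (c + 1) = colTop D c :=
  colBot_colTop_eq_of_inDiag_iff hA hne fun _ =>
    (inDiag_addCol_succ hflush).trans (inDiag_iff_colBot_colTop hD)

lemma hookLen_addCol_zero (hA : IsSkewRows (addCol m h D)) (hcol : h ≤ i ∧ i < h + m) :
    hookLen (addCol m h D) i 0 = rowEnd D i + (h + m - i) := by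
  rw [hookLen_eq hA (inDiag_addCol_zero.mpr hcol), rowEnd_addCol (lt_max_of_lt_right hcol.2),
    (colBot_colTop_addCol_zero hA (by omega)).2]
  omega

lemma hookLen_addCol_succ (hD : IsSkewRows D) (hA : IsSkewRows (addCol m h D))
    (hflush : ∀ i, h ≤ i → i < h + m → i < D.length → rowStart D i = 0)
    (hin : InDiag D i c) :
    hookLen (addCol m h D) i (c + 1) = hookLen D i c := by
  have hcol := (inDiag_iff_colBot_colTop hD).mp hin
  rw [hookLen_eq hA ((inDiag_addCol_succ hflush).mpr hin), hookLen_eq hD hin,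
    rowEnd_addCol (lt_max_of_lt_left hin.1),
    (colBot_colTop_addCol_succ hD hA hflush (by omega)).2]
  omega

lemma hookBounded_addCol_iff (hD : IsSkewRows D) (hA : IsSkewRows (addCol m h D))
    (hflush : ∀ i, h ≤ i → i < h + m → i < D.length → rowStart D i = 0) :
    HookBounded k (addCol m h D) ↔
      HookBounded k D ∧ ∀ i, h ≤ i → i < h + m → rowEnd D i + (h + m - i) ≤ k := by
  constructor
  · intro hB
    refine ⟨fun i c hin => ?_, fun i h1 h2 => ?_⟩
    · rw [← hookLen_addCol_succ hD hA hflush hin]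
      exact hB i (c + 1) ((inDiag_addCol_succ hflush).mpr hin)
    · rw [← hookLen_addCol_zero hA ⟨h1, h2⟩]
      exact hB i 0 (inDiag_addCol_zero.mpr ⟨h1, h2⟩)
  · rintro ⟨hB, hcol⟩ i (_ | c) hin
    · have hi := inDiag_addCol_zero.mp hin
      rw [hookLen_addCol_zero hA hi]
      exact hcol i hi.1 hi.2
    · have hin := (inDiag_addCol_succ hflush).mp hin
      rw [hookLen_addCol_succ hD hA hflush hin]
      exact hB i c hin

lemma colValid_length (hD : IsSkewRows D) (hB : HookBounded k D) (hmk : m ≤ k) :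
    ColValid k m D.length D :=
  have hflush : ∀ i, D.length ≤ i → i < D.length + m → i < D.length → rowStart D i = 0 :=
    fun _ h1 _ h3 => absurd h3 (not_lt.mpr h1)
  have hA := isSkewRows_addCol hD (m := m) le_rfl (Nat.le_add_right _ _)
  ⟨hflush, hA, (hookBounded_addCol_iff hD hA hflush).mpr
    ⟨hB, fun i h1 _ => by rw [rowEnd_of_length_le h1]; omega⟩⟩

lemma exists_kMul_eq_addCol (hD : IsSkewRows D) (hB : HookBounded k D) (hmk : m ≤ k) :
    ∃ h, kMul k m D = addCol m h D ∧ ColValid k m h D ∧ ∀ h' < h, ¬ ColValid k m h' D :=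
  ⟨_, rfl, Nat.sInf_mem (s := {h | ColValid k m h D}) ⟨_, colValid_length hD hB hmk⟩,
    fun _ => Nat.notMem_of_lt_sInf⟩

end AddCol

structure KSkewInvariant (k : ℕ) (L : List ℕ) (D : List (ℕ × ℕ)) : Prop where
  isSkewRows : IsSkewRows D
  hookBounded : HookBounded k D
  rowEnd_zero : rowEnd D 0 = L.length
  colBot_lt_colTop : ∀ c < rowEnd D 0, colBot D c < colTop D c
  colTop_sub_colBot : ∀ c < rowEnd D 0, colTop D c - colBot D c = L.getD c 0
  /-- If column `c` sits directly above row `j`, which starts just right of it, then lowering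
  the column by one row would give its new bottom cell a hook length `L[c] + rowLen D j > k`. -/
  lt_of_colBot_eq : ∀ j c, rowStart D j = c + 1 → colBot D c = j + 1 →
    k < L.getD c 0 + rowLen D j

namespace KSkewInvariant

variable {k a h : ℕ} {L : List ℕ} {D : List (ℕ × ℕ)}

lemma nil : KSkewInvariant k [] [] where
  isSkewRows := isSkewRows_iff.mpr ⟨fun _ h => absurd h (Nat.not_lt_zero _),
    fun _ h => absurd h (Nat.not_lt_zero _)⟩
  hookBounded _ _ h := absurd h.1 (Nat.not_lt_zero _)
  rowEnd_zero := rowEnd_of_length_le le_rfl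
  colBot_lt_colTop _ h := absurd h (by simp [rowEnd_of_length_le])
  colTop_sub_colBot _ h := absurd h (by simp [rowEnd_of_length_le])
  lt_of_colBot_eq _ _ h := by simp [rowStart_of_length_le] at h

/-- Lowering the new column by one row only shrinks the hooks of its cells other than the new
bottom one. -/
lemma lt_add_rowLen_of_not_colValid (hG : KSkewInvariant k L D) (hLa : ∀ x ∈ L, x ≤ a)
    (hv : ColValid k a (h + 1) D) (hnv : ¬ ColValid k a h D)
    (hs : rowStart D h = 0) : k < a + rowLen D h := by
  obtain ⟨hflush, hA, hB⟩ := hv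
  have hD := hG.isSkewRows
  have hhD := le_length_of_isSkewRows_addCol hA
  have hpos := hD.rowLen_pos (i := h) (by omega)
  have hE0 : 0 < rowEnd D 0 := by
    have := hD.antitone_rowEnd (Nat.zero_le h)
    rw [rowEnd_eq] at this
    omega
  have hL : 0 < L.length := hG.rowEnd_zero ▸ hE0
  have hL0 : L.getD 0 0 ≤ a := hLa _ (List.getD_eq_getElem _ _ hL ▸ List.getElem_mem hL)
  have hbot : colBot D 0 ≤ h := (colBot_le_iff hD).mpr hs.le
  -- column `0` of `D` starts at or below row `h` and has height `L[0] ≤ a`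
  have hlen : D.length ≤ h + a := by
    have := hG.colTop_sub_colBot 0 hE0
    rw [colTop_zero hD] at this
    omega
  have hflush' : ∀ i, h ≤ i → i < h + a → i < D.length → rowStart D i = 0 := by
    intro i h1 h2 h3
    rcases h1.eq_or_lt with rfl | h1
    · exact hs
    · exact hflush i h1 (by omega) h3
  have hA' := isSkewRows_addCol hD (by omega) hlen
  by_contra! hk
  refine hnv ⟨hflush', hA',
    (hookBounded_addCol_iff hD hA' hflush').mpr ⟨hG.hookBounded, fun i h1 h2 => ?_⟩⟩
  rcases h1.eq_or_lt with rfl | h1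
  · rw [rowEnd_eq, hs]
    omega
  · have := ((hookBounded_addCol_iff hD hA hflush).mp hB).2 i h1 (by omega)
    omega

lemma lt_of_colBot_addCol_eq (hG : KSkewInvariant k L D) (hLa : ∀ x ∈ L, x ≤ a) (ha : 0 < a)
    (hv : ColValid k a h D) (hmin : ∀ h' < h, ¬ ColValid k a h' D) {j c : ℕ}
    (hs : rowStart (addCol a h D) j = c + 1) (hb : colBot (addCol a h D) c = j + 1) :
    k < (a :: L).getD c 0 + rowLen (addCol a h D) j := by
  obtain ⟨hflush, hA, hB⟩ := hv
  have hD := hG.isSkewRows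
  have hhD := le_length_of_isSkewRows_addCol hA
  have hlen := length_le_of_isSkewRows_addCol hA ha
  have hj : j < max D.length (h + a) := by
    by_contra hj
    rw [rowStart_of_length_le (by rw [length_addCol]; omega)] at hs
    omega
  rw [rowStart_addCol hj] at hs
  split_ifs at hs with hjcol
  rw [rowLen_addCol hj hjcol]
  rcases c with _ | c
  · rw [(colBot_colTop_addCol_zero hA ha).1] at hb
    subst hb
    exact hG.lt_add_rowLen_of_not_colValid hLa ⟨hflush, hA, hB⟩ (hmin j (by omega)) (by omega)
  · have hjD : j < D.length := by omega
    have hcL : c < rowEnd D 0 := by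
      have := hD.antitone_rowEnd (Nat.zero_le j)
      have := hD.rowLen_pos hjD
      have := rowEnd_eq D j
      omega
    rw [(colBot_colTop_addCol_succ hD hA hflush (hG.colBot_lt_colTop c hcL)).1] at hb
    exact hG.lt_of_colBot_eq j c (by omega) hb

lemma kMul (hG : KSkewInvariant k L D) (hLa : ∀ x ∈ L, x ≤ a) (ha : 0 < a) (hak : a ≤ k) :
    KSkewInvariant k (a :: L) (kMul k a D) := by
  obtain ⟨h, hkm, hv, hmin⟩ := exists_kMul_eq_addCol hG.isSkewRows hG.hookBounded hak
  have ⟨hflush, hA, hB⟩ := hv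
  have hD := hG.isSkewRows
  have hcol0 := colBot_colTop_addCol_zero hA ha
  have hE0 : rowEnd (addCol a h D) 0 = rowEnd D 0 + 1 :=
    rowEnd_addCol (lt_max_of_lt_right (by omega))
  have hcol (c : ℕ) (hc : c < rowEnd D 0) := colBot_colTop_addCol_succ hD hA hflush
    (hG.colBot_lt_colTop c hc)
  rw [hkm]
  refine ⟨hA, hB, by rw [hE0, hG.rowEnd_zero, List.length_cons], ?_, ?_, ?_⟩
  · rintro (_ | c) hc
    · omega
    · rw [hE0] at hc
      rw [(hcol c (by omega)).1, (hcol c (by omega)).2]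
      exact hG.colBot_lt_colTop c (by omega)
  · rintro (_ | c) hc
    · rw [hcol0.1, hcol0.2, List.getD_cons_zero]
      omega
    · rw [hE0] at hc
      rw [(hcol c (by omega)).1, (hcol c (by omega)).2, List.getD_cons_succ]
      exact hG.colTop_sub_colBot c (by omega)
  · exact fun j c => hG.lt_of_colBot_addCol_eq hLa ha hv hmin

end KSkewInvariant

lemma kSkewInvariant_kSkewDiagram {k : ℕ} {l : List ℕ} (hl : IsKBoundedPartition k l) :
    KSkewInvariant k l (kSkewDiagram k l) := by
  induction l with
  | nil => exact .nil
  | cons a l ih =>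
    obtain ⟨⟨hsort, hpos⟩, hbd⟩ := hl
    exact (ih ⟨⟨hsort.of_cons, fun x hx => hpos x (.tail _ hx)⟩,
      fun x hx => hbd x (.tail _ hx)⟩).kMul (fun x hx => List.rel_of_pairwise_cons hsort hx)
      (hpos a (.head _)) (hbd a (.head _))

section TransposeFrom

/-- The transpose of the rows `j, j + 1, …` of `D`, moved down by `j` rows: its row `c` is the
part of column `c` of `D` on or above row `j`. -/
noncomputable def transposeFrom (D : List (ℕ × ℕ)) (j : ℕ) : List (ℕ × ℕ) :=
  (List.range (rowEnd D j)).map fun c => (colBot D c - j, (colTop D c - j) - (colBot D c - j))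

variable {k h j c x : ℕ} {D : List (ℕ × ℕ)}

lemma length_transposeFrom : (transposeFrom D j).length = rowEnd D j := by
  simp [transposeFrom]

lemma rowOf_transposeFrom (hc : c < rowEnd D j) :
    rowOf (transposeFrom D j) c = (colBot D c - j, (colTop D c - j) - (colBot D c - j)) := by
  rw [rowOf, List.getD_eq_getElem _ _ (by rwa [length_transposeFrom])]
  simp [transposeFrom]

lemma rowStart_transposeFrom (hc : c < rowEnd D j) :
    rowStart (transposeFrom D j) c = colBot D c - j := by
  rw [rowStart, rowOf_transposeFrom hc]

lemma rowEnd_transposeFrom (hD : IsSkewRows D) (hc : c < rowEnd D j)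
    (hne : colBot D c < colTop D c) : rowEnd (transposeFrom D j) c = colTop D c - j := by
  have := (lt_colTop_iff hD).mpr hc
  rw [rowEnd, rowOf_transposeFrom hc]
  omega

lemma inDiag_transposeFrom (hD : IsSkewRows D) :
    InDiag (transposeFrom D j) c x ↔ InDiag D (x + j) c := by
  rw [inDiag_iff_colBot_colTop hD, inDiag_iff, length_transposeFrom]
  constructor
  · rintro ⟨hc, hs, he⟩
    rw [rowStart, rowOf_transposeFrom hc] at hs
    rw [rowEnd, rowOf_transposeFrom hc] at he
    dsimp only at hs he
    omega
  · rintro ⟨hb, ht⟩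
    have hc : c < rowEnd D j :=
      ((lt_colTop_iff hD).mp ht).trans_le (hD.antitone_rowEnd (Nat.le_add_left j x))
    refine ⟨hc, ?_⟩
    rw [rowStart, rowEnd, rowOf_transposeFrom hc]
    dsimp only
    omega

lemma isSkewRows_transposeFrom (hD : IsSkewRows D)
    (hcol : ∀ c < rowEnd D 0, colBot D c < colTop D c) (j : ℕ) :
    IsSkewRows (transposeFrom D j) := by
  have hne (c : ℕ) (hc : c < rowEnd D j) : colBot D c < colTop D c :=
    hcol c (hc.trans_le (hD.antitone_rowEnd (Nat.zero_le j)))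
  rw [isSkewRows_iff, length_transposeFrom]
  refine ⟨fun c hc => ?_, fun c hc => ?_⟩
  · have := (lt_colTop_iff hD).mpr hc
    have := hne c hc
    rw [rowLen, rowOf_transposeFrom hc]
    dsimp only
    omega
  · have hc' : c < rowEnd D j := Nat.lt_of_succ_lt hc
    rw [rowStart_transposeFrom hc, rowStart_transposeFrom hc',
      rowEnd_transposeFrom hD hc (hne _ hc), rowEnd_transposeFrom hD hc' (hne c hc')]
    exact ⟨Nat.sub_le_sub_right (antitone_colBot D (Nat.le_succ c)) j,
      Nat.sub_le_sub_right (antitone_colTop D (Nat.le_succ c)) j⟩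

lemma hookLen_transposeFrom (hD : IsSkewRows D)
    (hcol : ∀ c < rowEnd D 0, colBot D c < colTop D c) (h : InDiag (transposeFrom D j) c x) :
    hookLen (transposeFrom D j) c x = hookLen D (x + j) c := by
  have hT := isSkewRows_transposeFrom hD hcol j
  have hin := (inDiag_transposeFrom hD).mp h
  have hc : c < rowEnd D j := length_transposeFrom (D := D) ▸ h.1
  have hne := hcol c (hc.trans_le (hD.antitone_rowEnd (Nat.zero_le j)))
  have hcolT : colTop (transposeFrom D j) x = rowEnd D (x + j) :=
    (colBot_colTop_eq_of_inDiag_iff hT (B := rowStart D (x + j)) (T := rowEnd D (x + j))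
      (by have := (inDiag_iff.mp hin).2; omega) fun c' => by
        rw [inDiag_transposeFrom hD, inDiag_iff]
        exact ⟨fun h => h.2, fun h => ⟨hin.1, h⟩⟩).2
  rw [hookLen_eq hT h, hookLen_eq hD hin, hcolT, rowEnd_transposeFrom hD hc hne]
  have := (inDiag_iff_colBot_colTop hD).mp hin
  omega

lemma hookBounded_transposeFrom (hD : IsSkewRows D)
    (hcol : ∀ c < rowEnd D 0, colBot D c < colTop D c) (hB : HookBounded k D) (j : ℕ) :
    HookBounded k (transposeFrom D j) := fun c x h => by
  rw [hookLen_transposeFrom hD hcol h]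
  exact hB _ _ ((inDiag_transposeFrom hD).mp h)

lemma rowStart_transposeFrom_succ (hD : IsSkewRows D) (hj : rowStart D j ≤ c)
    (hc : c < rowEnd D (j + 1)) : rowStart (transposeFrom D (j + 1)) c = 0 := by
  rw [rowStart_transposeFrom hc, Nat.sub_eq_zero_iff_le]
  exact ((colBot_le_iff hD).mpr hj).trans (Nat.le_succ j)

/-- A nonempty column left of row `j` lies above that row, hence meets row `j + 1`. -/
lemma lt_rowEnd_succ_of_lt_rowStart (hD : IsSkewRows D) (hne : colBot D c < colTop D c)
    (hc : c < rowStart D j) : c < rowEnd D (j + 1) := by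
  have := not_le.mp (mt (colBot_le_iff hD).mp (not_le.mpr hc))
  exact (lt_colTop_iff hD).mp (by omega)

lemma addCol_transposeFrom_succ (hD : IsSkewRows D)
    (hcol : ∀ c < rowEnd D 0, colBot D c < colTop D c) :
    addCol (rowLen D j) (rowStart D j) (transposeFrom D (j + 1)) = transposeFrom D j := by
  have hEj := hD.antitone_rowEnd (Nat.le_add_right j 1)
  have hEj' := rowEnd_eq D j
  have hmax : max (transposeFrom D (j + 1)).length (rowStart D j + rowLen D j) = rowEnd D j := by
    rw [length_transposeFrom]
    omega
  refine ext_of_rowStart_of_rowEnd (by rw [length_addCol, hmax, length_transposeFrom])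
    fun c hc => ?_
  rw [length_addCol, hmax] at hc
  have hi : c < max (transposeFrom D (j + 1)).length (rowStart D j + rowLen D j) := hmax ▸ hc
  have hne := hcol c (hc.trans_le (hD.antitone_rowEnd (Nat.zero_le j)))
  have hjt := (lt_colTop_iff hD).mpr hc
  have hbot := colBot_le_iff hD (r := j) (c := c)
  rw [rowStart_addCol hi, rowEnd_addCol hi, rowStart_transposeFrom hc,
    rowEnd_transposeFrom hD hc hne]
  by_cases hup : c < rowEnd D (j + 1)
  · have := (lt_colTop_iff hD).mpr hup
    rw [rowStart_transposeFrom hup, rowEnd_transposeFrom hD hup hne]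
    by_cases hs : rowStart D j ≤ c
    · have := hbot.mpr hs
      rw [if_pos ⟨hs, by omega⟩]
      omega
    · have := mt hbot.mp hs
      rw [if_neg (by omega)]
      omega
  · have := mt (lt_colTop_iff hD).mp hup
    rw [rowStart_of_length_le (D := transposeFrom D (j + 1)) (by rw [length_transposeFrom]; omega),
      rowEnd_of_length_le (D := transposeFrom D (j + 1)) (by rw [length_transposeFrom]; omega)]
    have hs : rowStart D j ≤ c :=
      not_lt.mp fun hs => hup (lt_rowEnd_succ_of_lt_rowStart hD hne hs)
    rw [if_pos ⟨hs, by omega⟩]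
    have := hbot.mpr hs
    omega

end TransposeFrom

namespace KSkewInvariant

variable {k h j : ℕ} {L : List ℕ} {D : List (ℕ × ℕ)}

/-- A placement at height `h < rowStart D j` forces column `h` of `D` to start at row `j + 1`,
like the column just left of row `j`; the hook at the bottom of the new column is then at least
`L[rowStart D j - 1] + rowLen D j > k`. -/
lemma not_colValid_transposeFrom (hG : KSkewInvariant k L D) (hL : L.Pairwise (· ≥ ·))
    (hh : h < rowStart D j) : ¬ ColValid k (rowLen D j) h (transposeFrom D (j + 1)) := by
  rintro ⟨hflush, hA, hB⟩
  have hD := hG.isSkewRows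
  have hcol := hG.colBot_lt_colTop
  have hj : j < D.length := by
    by_contra hj
    simp [rowStart_of_length_le (not_lt.mp hj)] at hh
  have hm := hD.rowLen_pos hj
  have hEj := rowEnd_eq D j
  have hE0 := hD.antitone_rowEnd (Nat.zero_le j)
  have hlen := length_le_of_isSkewRows_addCol hA hm
  rw [length_transposeFrom] at hlen
  have hmeet (c : ℕ) (hc : c < rowStart D j) : c < rowEnd D (j + 1) :=
    lt_rowEnd_succ_of_lt_rowStart hD (hcol c (by omega)) hc
  have hbot_eq (c : ℕ) (hc : c < rowStart D j) (hhc : h ≤ c) : colBot D c = j + 1 := by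
    have : rowStart (transposeFrom D (j + 1)) c = 0 :=
      hflush c hhc (by have := hmeet c hc; omega) (by rw [length_transposeFrom]; exact hmeet c hc)
    rw [rowStart_transposeFrom (hmeet c hc)] at this
    have := not_le.mp (mt (colBot_le_iff hD).mp (not_le.mpr hc))
    omega
  have hk := hG.lt_of_colBot_eq j (rowStart D j - 1) (by omega)
    (hbot_eq _ (by omega) (by omega))
  have hhook := ((hookBounded_addCol_iff (isSkewRows_transposeFrom hD hcol _) hA hflush).mp hB).2
    h le_rfl (by omega)
  rw [rowEnd_transposeFrom hD (hmeet h hh) (hcol h (by omega))] at hhook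
  have hheight := hG.colTop_sub_colBot h (by omega)
  rw [hbot_eq h hh le_rfl] at hheight
  have hsort := List.getD_le_getD_of_pairwise_ge hL (Nat.le_sub_one_of_lt hh)
    (b := rowStart D j - 1) (by rw [← hG.rowEnd_zero]; omega)
  omega

end KSkewInvariant

section TransposeRecursion

variable {k : ℕ} {L : List ℕ} {D : List (ℕ × ℕ)}

lemma kMul_transposeFrom (hG : KSkewInvariant k L D) (hL : L.Pairwise (· ≥ ·)) (j : ℕ) :
    kMul k (rowLen D j) (transposeFrom D (j + 1)) = transposeFrom D j := by
  have hD := hG.isSkewRows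
  have hcol := hG.colBot_lt_colTop
  obtain ⟨h, hkm, hv, hmin⟩ := exists_kMul_eq_addCol (isSkewRows_transposeFrom hD hcol _)
    (hookBounded_transposeFrom hD hcol hG.hookBounded _) (rowLen_le_of_hookBounded hG.hookBounded j)
  have hadd := addCol_transposeFrom_succ (j := j) hD hcol
  have hvj : ColValid k (rowLen D j) (rowStart D j) (transposeFrom D (j + 1)) :=
    ⟨fun c hs _ hc => rowStart_transposeFrom_succ hD hs (length_transposeFrom ▸ hc),
      hadd ▸ isSkewRows_transposeFrom hD hcol j,
      hadd ▸ hookBounded_transposeFrom hD hcol hG.hookBounded j⟩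
  have hh : h = rowStart D j := le_antisymm (not_lt.mp fun hlt => hmin _ hlt hvj)
    (not_lt.mp fun hlt => hG.not_colValid_transposeFrom hL hlt hv)
  rw [hkm, hh, hadd]

lemma kSkewDiagram_drop_map_snd (hG : KSkewInvariant k L D) (hL : L.Pairwise (· ≥ ·))
    (j : ℕ) :
    kSkewDiagram k ((D.map Prod.snd).drop j) = transposeFrom D j := by
  induction hn : D.length - j generalizing j with
  | zero =>
    rw [List.drop_of_length_le (by simp only [List.length_map]; omega)]
    simp [kSkewDiagram, transposeFrom, rowEnd_of_length_le (show D.length ≤ j by omega)]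
  | succ n ih =>
    have hj : j < D.length := by omega
    rw [List.drop_eq_getElem_cons (by simpa using hj), List.getElem_map, kSkewDiagram,
      ih (j + 1) (by omega), ← kMul_transposeFrom hG hL j, rowLen, rowOf_eq_getElem hj]

end TransposeRecursion

theorem kSkewDiagram_transpose_general (k : ℕ) (l : List ℕ)
    (hl : IsKBoundedPartition k l) :
    (cellsOf (kSkewDiagram k l)).image Prod.swap =
      cellsOf (kSkewDiagram k (kConjugate k l)) := by
  have hG := kSkewInvariant_kSkewDiagram hl
  have hT : kSkewDiagram k (kConjugate k l) = transposeFrom (kSkewDiagram k l) 0 :=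
    kSkewDiagram_drop_map_snd hG hl.1.1 0
  ext ⟨c, x⟩
  rw [hT, Finset.mem_image, mem_cellsOf, inDiag_transposeFrom hG.isSkewRows, Nat.add_zero]
  constructor
  · rintro ⟨p, hp, hpc⟩
    rw [← Prod.swap_swap p, hpc] at hp
    exact mem_cellsOf.mp hp
  · exact fun h => ⟨(x, c), mem_cellsOf.mpr h, rfl⟩

/-- For a `k`-bounded partition `λ` with `k`-conjugate
`μ = λ^{ω_k}`, the conjugate (transpose across the main diagonal, i.e. the image
of the cell set under swapping coordinates) of the skew diagram `D(λ)` equals the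
skew diagram `D(μ)`. -/
theorem kSkewDiagram_transpose (k : ℕ) (hk : 0 < k) (l : List ℕ)
    (hl : IsKBoundedPartition k l) :
    (cellsOf (kSkewDiagram k l)).image Prod.swap =
      cellsOf (kSkewDiagram k (kConjugate k l)) :=
  kSkewDiagram_transpose_general k l hl
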